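/- arXiv:2605.30640 — 2 statements merged into one kernel-verified Lean document; each statement's English description precedes it below -/
import Mathlib

section
/- For orthogonal projectors P_L and P_R, any matrix ΔW_0 ∈ ℝ^{d_out×d_in}, and penalties λ_{LR̄}, λ_{L̄R}, λ_{L̄R̄} > −1, the objective f(ΔW) = (1/2)‖ΔW − ΔW_0‖_F² + (1/2)·(λ_{LR̄}‖Π_{LR̄}(ΔW)‖_F² + λ_{L̄R}‖Π_{L̄R}(ΔW)‖_F² + λ_{L̄R̄}‖Π_{L̄R̄}(ΔW)‖_F²) attains its minimum at ΔW_⋆ = Π_{LR}(ΔW_0) + (1+λ_{LR̄})⁻¹ Π_{LR̄}(ΔW_0) + (1+λ_{L̄R})⁻¹ Π_{L̄R}(ΔW_0) + (1+λ_{L̄R̄})⁻¹ Π_{L̄R̄}(ΔW_0); that is, f(ΔW_⋆) ≤ f(X) for every matrix X ∈ ℝ^{d_out×d_in}. -/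
open Matrix

/-- Frobenius norm ‖X‖_F = sqrt(tr(Xᵀ X)). -/
noncomputable def frob {dout din : ℕ} (X : Matrix (Fin dout) (Fin din) ℝ) : ℝ :=
  Real.sqrt (Matrix.trace (Xᵀ * X))

/-- Fully aligned block Π_{LR}(X) = P_L X P_R. -/
def piLR {dout din : ℕ} (PL : Matrix (Fin dout) (Fin dout) ℝ)
    (PR : Matrix (Fin din) (Fin din) ℝ) (X : Matrix (Fin dout) (Fin din) ℝ) :
    Matrix (Fin dout) (Fin din) ℝ := PL * X * PR

/-- Mixed block Π_{LR̄}(X) = P_L X (I − P_R). -/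
def piLRc {dout din : ℕ} (PL : Matrix (Fin dout) (Fin dout) ℝ)
    (PR : Matrix (Fin din) (Fin din) ℝ) (X : Matrix (Fin dout) (Fin din) ℝ) :
    Matrix (Fin dout) (Fin din) ℝ := PL * X * (1 - PR)

/-- Mixed block Π_{L̄R}(X) = (I − P_L) X P_R. -/
def piLcR {dout din : ℕ} (PL : Matrix (Fin dout) (Fin dout) ℝ)
    (PR : Matrix (Fin din) (Fin din) ℝ) (X : Matrix (Fin dout) (Fin din) ℝ) :
    Matrix (Fin dout) (Fin din) ℝ := (1 - PL) * X * PR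

/-- Off-subspace block Π_{L̄R̄}(X) = (I − P_L) X (I − P_R). -/
def piLcRc {dout din : ℕ} (PL : Matrix (Fin dout) (Fin dout) ℝ)
    (PR : Matrix (Fin din) (Fin din) ℝ) (X : Matrix (Fin dout) (Fin din) ℝ) :
    Matrix (Fin dout) (Fin din) ℝ := (1 - PL) * X * (1 - PR)

/-- The CSULoRA objective
f(ΔW) = (1/2)‖ΔW − ΔW₀‖_F² + (1/2)(λ_{LR̄}‖Π_{LR̄}(ΔW)‖_F² + λ_{L̄R}‖Π_{L̄R}(ΔW)‖_F²
        + λ_{L̄R̄}‖Π_{L̄R̄}(ΔW)‖_F²). -/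
noncomputable def objf {dout din : ℕ} (PL : Matrix (Fin dout) (Fin dout) ℝ)
    (PR : Matrix (Fin din) (Fin din) ℝ) (ΔW₀ : Matrix (Fin dout) (Fin din) ℝ)
    (lLRc lLcR lLcRc : ℝ) (ΔW : Matrix (Fin dout) (Fin din) ℝ) : ℝ :=
  (1/2) * frob (ΔW - ΔW₀) ^ 2 +
    (1/2) * (lLRc * frob (piLRc PL PR ΔW) ^ 2 + lLcR * frob (piLcR PL PR ΔW) ^ 2 +
      lLcRc * frob (piLcRc PL PR ΔW) ^ 2)

/-- The CSULoRA closed-form corrected update ΔW_⋆. -/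
noncomputable def wstar {dout din : ℕ} (PL : Matrix (Fin dout) (Fin dout) ℝ)
    (PR : Matrix (Fin din) (Fin din) ℝ) (ΔW₀ : Matrix (Fin dout) (Fin din) ℝ)
    (lLRc lLcR lLcRc : ℝ) : Matrix (Fin dout) (Fin din) ℝ :=
  piLR PL PR ΔW₀ + (1 + lLRc)⁻¹ • piLRc PL PR ΔW₀ + (1 + lLcR)⁻¹ • piLcR PL PR ΔW₀ +
    (1 + lLcRc)⁻¹ • piLcRc PL PR ΔW₀

namespace CSUaux

variable {dout din : ℕ}

/-- Trace inner product on matrices. -/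
noncomputable def ip (A B : Matrix (Fin dout) (Fin din) ℝ) : ℝ := Matrix.trace (Aᵀ * B)

lemma ip_self_nonneg (A : Matrix (Fin dout) (Fin din) ℝ) : 0 ≤ ip A A := by
  unfold ip
  rw [Matrix.trace]
  apply Finset.sum_nonneg
  intro j _
  rw [Matrix.diag_apply, Matrix.mul_apply]
  apply Finset.sum_nonneg
  intro i _
  simp [Matrix.transpose_apply, mul_self_nonneg]

lemma frob_sq (A : Matrix (Fin dout) (Fin din) ℝ) : frob A ^ 2 = ip A A :=
  Real.sq_sqrt (ip_self_nonneg A)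

lemma ip_add_left (A B C : Matrix (Fin dout) (Fin din) ℝ) :
    ip (A + B) C = ip A C + ip B C := by
  simp [ip, Matrix.transpose_add, Matrix.add_mul]

lemma ip_add_right (A B C : Matrix (Fin dout) (Fin din) ℝ) :
    ip A (B + C) = ip A B + ip A C := by
  simp [ip, Matrix.mul_add]

lemma ip_sub_left (A B C : Matrix (Fin dout) (Fin din) ℝ) :
    ip (A - B) C = ip A C - ip B C := by
  simp [ip, Matrix.transpose_sub, Matrix.sub_mul]

lemma ip_sub_right (A B C : Matrix (Fin dout) (Fin din) ℝ) :
    ip A (B - C) = ip A B - ip A C := by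
  simp [ip, Matrix.mul_sub]

lemma ip_smul_left (c : ℝ) (A B : Matrix (Fin dout) (Fin din) ℝ) :
    ip (c • A) B = c * ip A B := by
  simp [ip, Matrix.transpose_smul, Matrix.smul_mul]

lemma ip_smul_right (c : ℝ) (A B : Matrix (Fin dout) (Fin din) ℝ) :
    ip A (c • B) = c * ip A B := by
  simp [ip, Matrix.mul_smul]

lemma ip_comm (A B : Matrix (Fin dout) (Fin din) ℝ) : ip A B = ip B A := by
  unfold ip
  rw [← Matrix.trace_transpose (Aᵀ * B), Matrix.transpose_mul, Matrix.transpose_transpose]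

lemma ip_zero_left (B : Matrix (Fin dout) (Fin din) ℝ) : ip 0 B = 0 := by
  simp [ip]

lemma ip_orthL {Q1 Q2 : Matrix (Fin dout) (Fin dout) ℝ}
    (S1 S2 : Matrix (Fin din) (Fin din) ℝ) (X Y : Matrix (Fin dout) (Fin din) ℝ)
    (h : Q1ᵀ * Q2 = 0) : ip (Q1 * X * S1) (Q2 * Y * S2) = 0 := by
  unfold ip
  have e : (Q1 * X * S1)ᵀ * (Q2 * Y * S2) = S1ᵀ * Xᵀ * (Q1ᵀ * Q2) * Y * S2 := by
    simp [Matrix.transpose_mul, Matrix.mul_assoc]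
  rw [e, h, Matrix.mul_zero, Matrix.zero_mul, Matrix.zero_mul, Matrix.trace_zero]

lemma ip_orthR {S1 S2 : Matrix (Fin din) (Fin din) ℝ}
    (Q1 Q2 : Matrix (Fin dout) (Fin dout) ℝ) (X Y : Matrix (Fin dout) (Fin din) ℝ)
    (h : S2 * S1ᵀ = 0) : ip (Q1 * X * S1) (Q2 * Y * S2) = 0 := by
  unfold ip
  have e : (Q1 * X * S1)ᵀ * (Q2 * Y * S2) = (S1ᵀ * (Xᵀ * Q1ᵀ * Q2 * Y)) * S2 := by
    simp [Matrix.transpose_mul, Matrix.mul_assoc]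
  rw [e, Matrix.trace_mul_comm]
  rw [← Matrix.mul_assoc, h, Matrix.zero_mul, Matrix.trace_zero]

lemma decomp (PL : Matrix (Fin dout) (Fin dout) ℝ) (PR : Matrix (Fin din) (Fin din) ℝ)
    (Y : Matrix (Fin dout) (Fin din) ℝ) :
    Y = piLR PL PR Y + piLRc PL PR Y + piLcR PL PR Y + piLcRc PL PR Y := by
  simp only [piLR, piLRc, piLcR, piLcRc, Matrix.sub_mul, Matrix.mul_sub,
    Matrix.one_mul, Matrix.mul_one]
  abel

lemma pyth (PL : Matrix (Fin dout) (Fin dout) ℝ) (PR : Matrix (Fin din) (Fin din) ℝ)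
    (hPLs : PLᵀ = PL) (hPLi : PL * PL = PL)
    (hPRs : PRᵀ = PR) (hPRi : PR * PR = PR)
    (Y : Matrix (Fin dout) (Fin din) ℝ) :
    ip Y Y = ip (piLR PL PR Y) (piLR PL PR Y) + ip (piLRc PL PR Y) (piLRc PL PR Y) +
      ip (piLcR PL PR Y) (piLcR PL PR Y) + ip (piLcRc PL PR Y) (piLcRc PL PR Y) := by
  have hLo : PLᵀ * (1 - PL) = 0 := by
    rw [hPLs, Matrix.mul_sub, Matrix.mul_one, hPLi, sub_self]
  have hLo' : (1 - PL)ᵀ * PL = 0 := by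
    rw [Matrix.transpose_sub, Matrix.transpose_one, hPLs, Matrix.sub_mul, Matrix.one_mul,
      hPLi, sub_self]
  have hRo : (1 - PR) * PRᵀ = 0 := by
    rw [hPRs, Matrix.sub_mul, Matrix.one_mul, hPRi, sub_self]
  have hRo' : PR * (1 - PR)ᵀ = 0 := by
    rw [Matrix.transpose_sub, Matrix.transpose_one, hPRs, Matrix.mul_sub, Matrix.mul_one,
      hPRi, sub_self]
  have o12 : ip (piLR PL PR Y) (piLRc PL PR Y) = 0 := ip_orthR _ _ _ _ hRo
  have o13 : ip (piLR PL PR Y) (piLcR PL PR Y) = 0 := ip_orthL _ _ _ _ hLo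
  have o14 : ip (piLR PL PR Y) (piLcRc PL PR Y) = 0 := ip_orthL _ _ _ _ hLo
  have o23 : ip (piLRc PL PR Y) (piLcR PL PR Y) = 0 := ip_orthL _ _ _ _ hLo
  have o24 : ip (piLRc PL PR Y) (piLcRc PL PR Y) = 0 := ip_orthL _ _ _ _ hLo
  have o34 : ip (piLcR PL PR Y) (piLcRc PL PR Y) = 0 := ip_orthR _ _ _ _ hRo
  have o21 : ip (piLRc PL PR Y) (piLR PL PR Y) = 0 := by rw [ip_comm]; exact o12
  have o31 : ip (piLcR PL PR Y) (piLR PL PR Y) = 0 := by rw [ip_comm]; exact o13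
  have o41 : ip (piLcRc PL PR Y) (piLR PL PR Y) = 0 := by rw [ip_comm]; exact o14
  have o32 : ip (piLcR PL PR Y) (piLRc PL PR Y) = 0 := by rw [ip_comm]; exact o23
  have o42 : ip (piLcRc PL PR Y) (piLRc PL PR Y) = 0 := by rw [ip_comm]; exact o24
  have o43 : ip (piLcRc PL PR Y) (piLcR PL PR Y) = 0 := by rw [ip_comm]; exact o34
  conv_lhs => rw [decomp PL PR Y]
  simp only [ip_add_left, ip_add_right, o12, o13, o14, o23, o24, o34, o21, o31, o41,
    o32, o42, o43]
  ring

lemma block (lam : ℝ) (h : -1 < lam) (Y Y₀ : Matrix (Fin dout) (Fin din) ℝ) :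
    ((1 + lam)⁻¹ - 1) * (((1 + lam)⁻¹ - 1) * ip Y₀ Y₀) +
      lam * ((1 + lam)⁻¹ * ((1 + lam)⁻¹ * ip Y₀ Y₀)) ≤
    ip (Y - Y₀) (Y - Y₀) + lam * ip Y Y := by
  have hμ : 0 < 1 + lam := by linarith
  have hc : (1 + lam) * (1 + lam)⁻¹ = 1 := mul_inv_cancel₀ hμ.ne'
  have hcc : (1 + lam) * ((1 + lam)⁻¹ * (1 + lam)⁻¹) = (1 + lam)⁻¹ := by
    rw [← mul_assoc, hc, one_mul]
  have hsub : ip (Y - Y₀) (Y - Y₀) = ip Y Y - 2 * ip Y Y₀ + ip Y₀ Y₀ := by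
    simp only [ip_sub_left, ip_sub_right, ip_comm Y₀ Y]; ring
  have e : ip (Y - (1 + lam)⁻¹ • Y₀) (Y - (1 + lam)⁻¹ • Y₀) =
      ip Y Y - 2 * ((1 + lam)⁻¹ * ip Y Y₀) + (1 + lam)⁻¹ * ((1 + lam)⁻¹ * ip Y₀ Y₀) := by
    simp only [ip_sub_left, ip_sub_right, ip_smul_left, ip_smul_right, ip_comm Y₀ Y]; ring
  have h0 : 0 ≤ ip Y Y - 2 * ((1 + lam)⁻¹ * ip Y Y₀) +
      (1 + lam)⁻¹ * ((1 + lam)⁻¹ * ip Y₀ Y₀) := by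
    rw [← e]; exact ip_self_nonneg _
  have key : (1 + lam) * (ip Y Y - 2 * ((1 + lam)⁻¹ * ip Y Y₀) +
      (1 + lam)⁻¹ * ((1 + lam)⁻¹ * ip Y₀ Y₀)) =
      (1 + lam) * ip Y Y - 2 * ip Y Y₀ + (1 + lam)⁻¹ * ip Y₀ Y₀ := by
    linear_combination (-2 * ip Y Y₀) * hc + (ip Y₀ Y₀) * hcc
  have key2 : 0 ≤ (1 + lam) * ip Y Y - 2 * ip Y Y₀ + (1 + lam)⁻¹ * ip Y₀ Y₀ := by
    rw [← key]; exact mul_nonneg hμ.le h0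
  have goal_eq : (ip (Y - Y₀) (Y - Y₀) + lam * ip Y Y) -
      (((1 + lam)⁻¹ - 1) * (((1 + lam)⁻¹ - 1) * ip Y₀ Y₀) +
        lam * ((1 + lam)⁻¹ * ((1 + lam)⁻¹ * ip Y₀ Y₀))) =
      (1 + lam) * ip Y Y - 2 * ip Y Y₀ + (1 + lam)⁻¹ * ip Y₀ Y₀ := by
    rw [hsub]
    linear_combination (-(ip Y₀ Y₀)) * hcc
  linarith [key2, goal_eq]

end CSUaux

open CSUaux

/-- the closed-form update ΔW_⋆ attains the minimum of the CSULoRA objective. -/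
theorem csulora_closed_form_is_minimizer {dout din : ℕ}
    (PL : Matrix (Fin dout) (Fin dout) ℝ) (PR : Matrix (Fin din) (Fin din) ℝ)
    (hPLs : PLᵀ = PL) (hPLi : PL * PL = PL)
    (hPRs : PRᵀ = PR) (hPRi : PR * PR = PR)
    (ΔW₀ : Matrix (Fin dout) (Fin din) ℝ)
    (lLRc lLcR lLcRc : ℝ)
    (h1 : -1 < lLRc) (h2 : -1 < lLcR) (h3 : -1 < lLcRc) :
    ∀ X : Matrix (Fin dout) (Fin din) ℝ,
      objf PL PR ΔW₀ lLRc lLcR lLcRc (wstar PL PR ΔW₀ lLRc lLcR lLcRc) ≤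
        objf PL PR ΔW₀ lLRc lLcR lLcRc X := by
  intro X
  -- projector algebra helpers
  have hLL : ∀ Z : Matrix (Fin dout) (Fin din) ℝ, PL * (PL * Z) = PL * Z := fun Z => by
    rw [← Matrix.mul_assoc, hPLi]
  have hLo : PL * (1 - PL) = 0 := by
    rw [Matrix.mul_sub, Matrix.mul_one, hPLi, sub_self]
  have hLo' : (1 - PL) * PL = 0 := by
    rw [Matrix.sub_mul, Matrix.one_mul, hPLi, sub_self]
  have hLcc : (1 - PL) * (1 - PL) = 1 - PL := by
    rw [Matrix.mul_sub, Matrix.mul_one, hLo', sub_zero]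
  have hLLc : ∀ Z : Matrix (Fin dout) (Fin din) ℝ, PL * ((1 - PL) * Z) = 0 := fun Z => by
    rw [← Matrix.mul_assoc, hLo, Matrix.zero_mul]
  have hLcL : ∀ Z : Matrix (Fin dout) (Fin din) ℝ, (1 - PL) * (PL * Z) = 0 := fun Z => by
    rw [← Matrix.mul_assoc, hLo', Matrix.zero_mul]
  have hLcLc : ∀ Z : Matrix (Fin dout) (Fin din) ℝ, (1 - PL) * ((1 - PL) * Z) = (1 - PL) * Z :=
    fun Z => by rw [← Matrix.mul_assoc, hLcc]
  have hRo : (1 - PR) * PR = 0 := by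
    rw [Matrix.sub_mul, Matrix.one_mul, hPRi, sub_self]
  have hRo' : PR * (1 - PR) = 0 := by
    rw [Matrix.mul_sub, Matrix.mul_one, hPRi, sub_self]
  have hRcc : (1 - PR) * (1 - PR) = 1 - PR := by
    rw [Matrix.sub_mul, Matrix.one_mul, hRo', sub_zero]
  -- blocks of the optimum
  have hA1 : piLR PL PR (wstar PL PR ΔW₀ lLRc lLcR lLcRc) = piLR PL PR ΔW₀ := by
    simp only [wstar, piLR, piLRc, piLcR, piLcRc, Matrix.mul_add, Matrix.add_mul,
      Matrix.mul_smul, Matrix.smul_mul, Matrix.mul_assoc, hLL, hLLc, hLcL, hLcLc,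
      hPRi, hRo, hRo', hRcc, Matrix.mul_zero, Matrix.zero_mul, smul_zero, add_zero, zero_add]
  have hA2 : piLRc PL PR (wstar PL PR ΔW₀ lLRc lLcR lLcRc) =
      (1 + lLRc)⁻¹ • piLRc PL PR ΔW₀ := by
    simp only [wstar, piLR, piLRc, piLcR, piLcRc, Matrix.mul_add, Matrix.add_mul,
      Matrix.mul_smul, Matrix.smul_mul, Matrix.mul_assoc, hLL, hLLc, hLcL, hLcLc,
      hPRi, hRo, hRo', hRcc, Matrix.mul_zero, Matrix.zero_mul, smul_zero, add_zero, zero_add]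
  have hA3 : piLcR PL PR (wstar PL PR ΔW₀ lLRc lLcR lLcRc) =
      (1 + lLcR)⁻¹ • piLcR PL PR ΔW₀ := by
    simp only [wstar, piLR, piLRc, piLcR, piLcRc, Matrix.mul_add, Matrix.add_mul,
      Matrix.mul_smul, Matrix.smul_mul, Matrix.mul_assoc, hLL, hLLc, hLcL, hLcLc,
      hPRi, hRo, hRo', hRcc, Matrix.mul_zero, Matrix.zero_mul, smul_zero, add_zero, zero_add]
  have hA4 : piLcRc PL PR (wstar PL PR ΔW₀ lLRc lLcR lLcRc) =
      (1 + lLcRc)⁻¹ • piLcRc PL PR ΔW₀ := by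
    simp only [wstar, piLR, piLRc, piLcR, piLcRc, Matrix.mul_add, Matrix.add_mul,
      Matrix.mul_smul, Matrix.smul_mul, Matrix.mul_assoc, hLL, hLLc, hLcL, hLcLc,
      hPRi, hRo, hRo', hRcc, Matrix.mul_zero, Matrix.zero_mul, smul_zero, add_zero, zero_add]
  -- block form of the objective
  have hform : ∀ Z : Matrix (Fin dout) (Fin din) ℝ,
      objf PL PR ΔW₀ lLRc lLcR lLcRc Z =
        (1/2) * (ip (piLR PL PR Z - piLR PL PR ΔW₀) (piLR PL PR Z - piLR PL PR ΔW₀) +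
          ip (piLRc PL PR Z - piLRc PL PR ΔW₀) (piLRc PL PR Z - piLRc PL PR ΔW₀) +
          ip (piLcR PL PR Z - piLcR PL PR ΔW₀) (piLcR PL PR Z - piLcR PL PR ΔW₀) +
          ip (piLcRc PL PR Z - piLcRc PL PR ΔW₀) (piLcRc PL PR Z - piLcRc PL PR ΔW₀)) +
        (1/2) * (lLRc * ip (piLRc PL PR Z) (piLRc PL PR Z) +
          lLcR * ip (piLcR PL PR Z) (piLcR PL PR Z) +
          lLcRc * ip (piLcRc PL PR Z) (piLcRc PL PR Z)) := by
    intro Z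
    have hs1 : piLR PL PR (Z - ΔW₀) = piLR PL PR Z - piLR PL PR ΔW₀ := by
      simp only [piLR, Matrix.mul_sub, Matrix.sub_mul, Matrix.one_mul, Matrix.mul_one]; try abel
    have hs2 : piLRc PL PR (Z - ΔW₀) = piLRc PL PR Z - piLRc PL PR ΔW₀ := by
      simp only [piLRc, Matrix.mul_sub, Matrix.sub_mul, Matrix.one_mul, Matrix.mul_one]; try abel
    have hs3 : piLcR PL PR (Z - ΔW₀) = piLcR PL PR Z - piLcR PL PR ΔW₀ := by
      simp only [piLcR, Matrix.mul_sub, Matrix.sub_mul, Matrix.one_mul, Matrix.mul_one]; try abel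
    have hs4 : piLcRc PL PR (Z - ΔW₀) = piLcRc PL PR Z - piLcRc PL PR ΔW₀ := by
      simp only [piLcRc, Matrix.mul_sub, Matrix.sub_mul, Matrix.one_mul, Matrix.mul_one]; try abel
    rw [objf, frob_sq, frob_sq, frob_sq, frob_sq,
      pyth PL PR hPLs hPLi hPRs hPRi (Z - ΔW₀), hs1, hs2, hs3, hs4]
  rw [hform X, hform (wstar PL PR ΔW₀ lLRc lLcR lLcRc), hA1, hA2, hA3, hA4]
  have z1 : piLR PL PR ΔW₀ - piLR PL PR ΔW₀ = (0 : Matrix (Fin dout) (Fin din) ℝ) :=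
    sub_self _
  have e2 : (1 + lLRc)⁻¹ • piLRc PL PR ΔW₀ - piLRc PL PR ΔW₀ =
      ((1 + lLRc)⁻¹ - 1) • piLRc PL PR ΔW₀ := by rw [sub_smul, one_smul]
  have e3 : (1 + lLcR)⁻¹ • piLcR PL PR ΔW₀ - piLcR PL PR ΔW₀ =
      ((1 + lLcR)⁻¹ - 1) • piLcR PL PR ΔW₀ := by rw [sub_smul, one_smul]
  have e4 : (1 + lLcRc)⁻¹ • piLcRc PL PR ΔW₀ - piLcRc PL PR ΔW₀ =
      ((1 + lLcRc)⁻¹ - 1) • piLcRc PL PR ΔW₀ := by rw [sub_smul, one_smul]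
  rw [z1, e2, e3, e4, ip_zero_left]
  simp only [ip_smul_left, ip_smul_right]
  have b1 := ip_self_nonneg (piLR PL PR X - piLR PL PR ΔW₀)
  have b2 := block lLRc h1 (piLRc PL PR X) (piLRc PL PR ΔW₀)
  have b3 := block lLcR h2 (piLcR PL PR X) (piLcR PL PR ΔW₀)
  have b4 := block lLcRc h3 (piLcRc PL PR X) (piLcRc PL PR ΔW₀)
  linarith
end

section
/- For orthogonal projectors P_L and P_R, any matrix ΔW_0 ∈ ℝ^{d_out×d_in}, and penalties λ_{LR̄}, λ_{L̄R}, λ_{L̄R̄} > −1, the minimizer of the objective f(ΔW) = (1/2)‖ΔW − ΔW_0‖_F² + (1/2)·(λ_{LR̄}‖Π_{LR̄}(ΔW)‖_F² + λ_{L̄R}‖Π_{L̄R}(ΔW)‖_F² + λ_{L̄R̄}‖Π_{L̄R̄}(ΔW)‖_F²) is unique: if f(X) ≤ f(Y) for all Y, then X = Π_{LR}(ΔW_0) + (1+λ_{LR̄})⁻¹ Π_{LR̄}(ΔW_0) + (1+λ_{L̄R})⁻¹ Π_{L̄R}(ΔW_0) + (1+λ_{L̄R̄})⁻¹ Π_{L̄R̄}(ΔW_0).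 -/
open Matrix

lemma eq_zero_of_forall_nonneg_quadratic {a b : ℝ} (h : ∀ t : ℝ, 0 ≤ a * (t * t) + b * t) :
    b = 0 := by
  have := discrim_le_zero (K := ℝ) (c := 0) (by simpa using h)
  rw [discrim] at this
  nlinarith [sq_nonneg b]

lemma CompleteOrthogonalIdempotents.eq_sum_inv_smul_of_sum_smul_eq {K V ι : Type*} [Field K]
    [AddCommGroup V] [Module K V] [Fintype ι] {p : ι → Module.End K V}
    (hp : CompleteOrthogonalIdempotents p) {c : ι → K} (hc : ∀ i, c i ≠ 0) {x y : V}
    (h : ∑ i, c i • p i x = y) : x = ∑ i, (c i)⁻¹ • p i y := by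
  have hblock : ∀ j, p j y = c j • p j x := by
    intro j
    rw [← h, map_sum, Finset.sum_eq_single j]
    · rw [map_smul, ← Module.End.mul_apply, (hp.idem j).eq]
    · intro i _ hij
      rw [map_smul, ← Module.End.mul_apply, hp.ortho hij.symm, LinearMap.zero_apply, smul_zero]
    · simp
  calc x = (∑ i, p i) x := by rw [hp.complete, Module.End.one_apply]
    _ = ∑ i, (c i)⁻¹ • p i y := by
      simp only [LinearMap.sum_apply, hblock, smul_smul, inv_mul_cancel₀ (hc _), one_smul]

section PenalizedQuadratic

variable {V ι : Type*} [AddCommGroup V] [Module ℝ V] [Fintype ι]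

def penalizedQuadratic (B : LinearMap.BilinForm ℝ V) (p : ι → Module.End ℝ V) (c : ι → ℝ)
    (a y : V) : ℝ :=
  B (y - a) (y - a) + ∑ i, c i * B (p i y) (p i y)

variable {B : LinearMap.BilinForm ℝ V} {p : ι → Module.End ℝ V} {c : ι → ℝ} {a x : V}

lemma LinearMap.BilinForm.IsSymm.apply_add_smul_self (hB : B.IsSymm) (u d : V) (t : ℝ) :
    B (u + t • d) (u + t • d) = B u u + 2 * t * B u d + t ^ 2 * B d d := by
  simp only [map_add, map_smul, LinearMap.add_apply, LinearMap.smul_apply, smul_eq_mul,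
    hB.eq d u]
  ring

lemma penalizedQuadratic_add_smul (hB : B.IsSymm) (hp : ∀ i, IsIdempotentElem (p i))
    (hpB : ∀ i, LinearMap.IsSelfAdjoint B (p i)) (d : V) (t : ℝ) :
    penalizedQuadratic B p c a (x + t • d) = penalizedQuadratic B p c a x
      + 2 * t * B (x - a + ∑ i, c i • p i x) d
      + t ^ 2 * (B d d + ∑ i, c i * B (p i d) (p i d)) := by
  have hcross : ∀ i, B (p i x) (p i d) = B (p i x) d := fun i => by
    rw [← hpB i, ← Module.End.mul_apply, (hp i).eq]
  have hsplit : ∀ i, p i (x + t • d) = p i x + t • p i d := fun i => by rw [map_add, map_smul]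
  rw [penalizedQuadratic, penalizedQuadratic, add_sub_right_comm, hB.apply_add_smul_self]
  simp only [hsplit, hB.apply_add_smul_self, hcross]
  simp only [map_add, map_sum, map_smul, LinearMap.add_apply, LinearMap.sum_apply,
    LinearMap.smul_apply, smul_eq_mul, mul_add, Finset.sum_add_distrib, Finset.mul_sum]
  ring_nf

lemma penalizedQuadratic_gradient_eq_zero (hB : B.IsSymm) (hp : ∀ i, IsIdempotentElem (p i))
    (hpB : ∀ i, LinearMap.IsSelfAdjoint B (p i))
    (hmin : ∀ y, penalizedQuadratic B p c a x ≤ penalizedQuadratic B p c a y) (d : V) :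
    B (x - a + ∑ i, c i • p i x) d = 0 := by
  have h := eq_zero_of_forall_nonneg_quadratic (a := B d d + ∑ i, c i * B (p i d) (p i d))
    (b := 2 * B (x - a + ∑ i, c i • p i x) d) fun t => by
      have := hmin (x + t • d)
      rw [penalizedQuadratic_add_smul hB hp hpB] at this
      linarith
  linarith

theorem eq_sum_inv_smul_of_forall_penalizedQuadratic_le (hB : B.IsSymm) (hB' : B.SeparatingLeft)
    (hp : CompleteOrthogonalIdempotents p) (hpB : ∀ i, LinearMap.IsSelfAdjoint B (p i))
    (hc : ∀ i, 1 + c i ≠ 0)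
    (hmin : ∀ y, penalizedQuadratic B p c a x ≤ penalizedQuadratic B p c a y) :
    x = ∑ i, (1 + c i)⁻¹ • p i a := by
  have hgrad := hB' _ (penalizedQuadratic_gradient_eq_zero hB hp.idem hpB hmin)
  refine hp.eq_sum_inv_smul_of_sum_smul_eq hc ?_
  calc ∑ i, (1 + c i) • p i x = (∑ i, p i) x + ∑ i, c i • p i x := by
        simp only [add_smul, one_smul, Finset.sum_add_distrib, LinearMap.sum_apply]
    _ = a := by rw [hp.complete, Module.End.one_apply]; linear_combination (norm := module) hgrad

end PenalizedQuadratic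

section Frobenius

variable {m n : Type*} [Fintype m] [Fintype n]

def frobeniusForm : LinearMap.BilinForm ℝ (Matrix m n ℝ) :=
  LinearMap.mk₂ ℝ (fun A B => trace (Aᵀ * B))
    (fun A A' B => by rw [transpose_add, Matrix.add_mul, trace_add])
    (fun r A B => by rw [transpose_smul, Matrix.smul_mul, trace_smul])
    (fun A B B' => by rw [Matrix.mul_add, trace_add])
    (fun r A B => by rw [Matrix.mul_smul, trace_smul])

lemma frobeniusForm_apply (A B : Matrix m n ℝ) : frobeniusForm A B = trace (Aᵀ * B) := rfl

lemma frobeniusForm_isSymm : (frobeniusForm : LinearMap.BilinForm ℝ (Matrix m n ℝ)).IsSymm :=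
  ⟨fun A B => by
    rw [frobeniusForm_apply, frobeniusForm_apply, ← trace_transpose, transpose_mul,
      transpose_transpose]⟩

lemma frobeniusForm_self_eq_zero_iff {A : Matrix m n ℝ} : frobeniusForm A A = 0 ↔ A = 0 := by
  rw [frobeniusForm_apply, ← conjTranspose_eq_transpose_of_trivial,
    trace_conjTranspose_mul_self_eq_zero_iff]

lemma frobeniusForm_separatingLeft :
    (frobeniusForm : LinearMap.BilinForm ℝ (Matrix m n ℝ)).SeparatingLeft :=
  fun A hA => frobeniusForm_self_eq_zero_iff.mp (hA A)

lemma frobeniusForm_self_nonneg (A : Matrix m n ℝ) : 0 ≤ frobeniusForm A A := by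
  rw [frobeniusForm_apply, ← conjTranspose_eq_transpose_of_trivial]
  exact (posSemidef_conjTranspose_mul_self A).trace_nonneg

lemma frob_sq {dout din : ℕ} (A : Matrix (Fin dout) (Fin din) ℝ) :
    frob A ^ 2 = frobeniusForm A A :=
  Real.sq_sqrt (frobeniusForm_self_nonneg A)

end Frobenius

section MulLeftRight

variable {R m n : Type*} [CommRing R] [Fintype m] [Fintype n]

def Matrix.mulLeftRightLinearMap (P : Matrix m m R) (Q : Matrix n n R) :
    Module.End R (Matrix m n R) :=
  mulRightLinearMap m R Q ∘ₗ mulLeftLinearMap n R P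

@[simp]
lemma Matrix.mulLeftRightLinearMap_apply (P : Matrix m m R) (Q : Matrix n n R)
    (X : Matrix m n R) : mulLeftRightLinearMap P Q X = P * X * Q := rfl

lemma Matrix.mulLeftRightLinearMap_mul (P P' : Matrix m m R) (Q Q' : Matrix n n R) :
    mulLeftRightLinearMap P Q * mulLeftRightLinearMap P' Q' =
      mulLeftRightLinearMap (P * P') (Q' * Q) := by
  ext1 X
  simp only [Module.End.mul_apply, mulLeftRightLinearMap_apply, Matrix.mul_assoc]

lemma CompleteOrthogonalIdempotents.mulLeftRightLinearMap [DecidableEq m] [DecidableEq n]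
    {I J : Type*} [Fintype I] [Fintype J] {e : I → Matrix m m R} {f : J → Matrix n n R}
    (he : CompleteOrthogonalIdempotents e) (hf : CompleteOrthogonalIdempotents f) :
    CompleteOrthogonalIdempotents fun ij : I × J =>
      Matrix.mulLeftRightLinearMap (e ij.1) (f ij.2) := by
  rw [CompleteOrthogonalIdempotents.iff_ortho_complete]
  constructor
  · rintro ⟨i, j⟩ ⟨i', j'⟩ hne
    ext1 X
    rw [Matrix.mulLeftRightLinearMap_mul, Matrix.mulLeftRightLinearMap_apply, LinearMap.zero_apply]
    by_cases hi : i = i'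
    · subst hi
      have hj : j' ≠ j := fun h => hne (h ▸ rfl)
      rw [hf.ortho hj, Matrix.mul_zero]
    · rw [he.ortho hi, Matrix.zero_mul, Matrix.zero_mul]
  · ext1 X
    calc (∑ ij : I × J, Matrix.mulLeftRightLinearMap (e ij.1) (f ij.2)) X
        = (∑ i, e i) * X * ∑ j, f j := by
          simp only [Fintype.sum_prod_type, LinearMap.sum_apply,
            Matrix.mulLeftRightLinearMap_apply, Matrix.sum_mul, Matrix.mul_sum]
          exact Finset.sum_comm
      _ = X := by rw [he.complete, hf.complete, Matrix.one_mul, Matrix.mul_one]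

lemma frobeniusForm_isSelfAdjoint_mulLeftRightLinearMap {P : Matrix m m ℝ} {Q : Matrix n n ℝ}
    (hP : Pᵀ = P) (hQ : Qᵀ = Q) :
    LinearMap.IsSelfAdjoint frobeniusForm (mulLeftRightLinearMap P Q) := fun A B => by
  simp only [mulLeftRightLinearMap_apply, frobeniusForm_apply, transpose_mul, hP, hQ]
  rw [Matrix.mul_assoc, trace_mul_comm]
  simp only [Matrix.mul_assoc]

end MulLeftRight

/-- the minimizer of the CSULoRA objective is unique and equals ΔW_⋆. -/
theorem csulora_minimizer_unique {dout din : ℕ}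
    (PL : Matrix (Fin dout) (Fin dout) ℝ) (PR : Matrix (Fin din) (Fin din) ℝ)
    (hPLs : PLᵀ = PL) (hPLi : PL * PL = PL)
    (hPRs : PRᵀ = PR) (hPRi : PR * PR = PR)
    (ΔW₀ : Matrix (Fin dout) (Fin din) ℝ)
    (lLRc lLcR lLcRc : ℝ)
    (h1 : -1 < lLRc) (h2 : -1 < lLcR) (h3 : -1 < lLcRc)
    (X : Matrix (Fin dout) (Fin din) ℝ)
    (hmin : ∀ Y : Matrix (Fin dout) (Fin din) ℝ,
      objf PL PR ΔW₀ lLRc lLcR lLcRc X ≤ objf PL PR ΔW₀ lLRc lLcR lLcRc Y) :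
    X = wstar PL PR ΔW₀ lLRc lLcR lLcRc := by
  have hL : CompleteOrthogonalIdempotents ![PL, 1 - PL] := .of_isIdempotentElem hPLi
  have hR : CompleteOrthogonalIdempotents ![PR, 1 - PR] := .of_isIdempotentElem hPRi
  set p : Fin 2 × Fin 2 → Module.End ℝ (Matrix (Fin dout) (Fin din) ℝ) :=
    fun ij => mulLeftRightLinearMap (![PL, 1 - PL] ij.1) (![PR, 1 - PR] ij.2)
  set c : Fin 2 × Fin 2 → ℝ := fun ij => ![![0, lLRc], ![lLcR, lLcRc]] ij.1 ij.2
  have hpB : ∀ ij, LinearMap.IsSelfAdjoint frobeniusForm (p ij) := by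
    rintro ⟨i, j⟩
    exact frobeniusForm_isSelfAdjoint_mulLeftRightLinearMap (by fin_cases i <;> simp [hPLs])
      (by fin_cases j <;> simp [hPRs])
  have hc : ∀ ij, 1 + c ij ≠ 0 := by
    rintro ⟨i, j⟩
    fin_cases i <;> fin_cases j <;> simp [c] <;> linarith
  have hobj : ∀ Y, objf PL PR ΔW₀ lLRc lLcR lLcRc Y =
      penalizedQuadratic frobeniusForm p c ΔW₀ Y / 2 := by
    intro Y
    simp only [objf, frob_sq, map_sub, LinearMap.sub_apply, piLRc, piLcR, piLcRc,
      penalizedQuadratic, mulLeftRightLinearMap_apply, Fintype.sum_prod_type, Fin.sum_univ_two,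
      cons_val_zero, cons_val_one, zero_mul, zero_add, c, p]
    ring
  have hX := eq_sum_inv_smul_of_forall_penalizedQuadratic_le frobeniusForm_isSymm
    frobeniusForm_separatingLeft (hL.mulLeftRightLinearMap hR) hpB hc fun Y => by
      linarith [hmin Y, hobj X, hobj Y]
  rw [hX]
  simp [wstar, Fintype.sum_prod_type, c, piLR, piLRc, piLcR, piLcRc, add_assoc]
end
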